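/- arXiv:1512.04485 — 2 statements merged into one kernel-verified Lean document; each statement's English description precedes it below -/
import Mathlib

section
/- Let λ, ν ∈ Λ with λ, ν, λ+ν all nonzero. For a nonzero μ ∈ Λ set h_i(μ) := h_i + (t1+t2)/E(μ) in H. If m_{i,j} = 3, then h_i(λ) h_j(λ+ν) h_i(ν) = h_j(ν) h_i(λ+ν) h_j(λ). -/
open CoxeterSystem

/-- `E(λ) = e^{-λ} - 1`. -/
noncomputable def Eelt {Λ : Type*} [AddCommGroup Λ] {K : Type*} [Field K]
    (exp : Multiplicative Λ →* Kˣ) (lam : Λ) : K :=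
  ((exp (Multiplicative.ofAdd (-lam)) : Kˣ) : K) - 1

/-- `h_i(μ) := h_i + (t1+t2)/E(μ)`. -/
noncomputable def YBfactor {r : ℕ} {W : Type*} [Group W] {M : CoxeterMatrix (Fin r)}
    (cs : CoxeterSystem M W) {Λ : Type*} [AddCommGroup Λ] {K : Type*} [Field K]
    (exp : Multiplicative Λ →* Kˣ) (t1 t2 : K) {H : Type*} [Ring H] [Algebra K H]
    (h : W → H) (i : Fin r) (mu : Λ) : H :=
  h (cs.simple i) + algebraMap K H ((t1 + t2) / Eelt exp mu)

/-!
The operators `h_i(μ) - h_i` are scalars, so expanding both sides of the Yang–Baxter relation and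
reducing with the quadratic relations `h_k² = (t1 + t2) h_k - t1 t2` and the braid relation
`h_i h_j h_i = h_j h_i h_j` leaves a single scalar condition. With `a, b, c` the scalars attached
to `λ, λ + ν, ν` and `T = t1 + t2`, it reads `ab + bc - ac + bT = 0`, which after clearing
denominators is the identity `E(λ + ν) = E(λ) E(ν) + E(λ) + E(ν)`.
-/

lemma Eelt_add {Λ K : Type*} [AddCommGroup Λ] [Field K] (exp : Multiplicative Λ →* Kˣ)
    (a b : Λ) : Eelt exp (a + b) = Eelt exp a * Eelt exp b + Eelt exp a + Eelt exp b := by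
  have hsplit : Multiplicative.ofAdd (-(a + b)) =
      Multiplicative.ofAdd (-a) * Multiplicative.ofAdd (-b) := by
    rw [← ofAdd_add, neg_add]
  simp only [Eelt, hsplit, map_mul, Units.val_mul]
  ring

lemma Eelt_ne_zero {Λ K : Type*} [AddCommGroup Λ] [Field K] {exp : Multiplicative Λ →* Kˣ}
    (hexp : Function.Injective exp) {μ : Λ} (hμ : μ ≠ 0) : Eelt exp μ ≠ 0 := by
  intro hE
  have hunit : exp (Multiplicative.ofAdd (-μ)) = exp 1 :=
    Units.ext (by simpa [Eelt, sub_eq_zero] using hE)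
  exact hμ (by simpa using hexp hunit)

lemma yang_baxter_scalar_identity {K : Type*} [Field K] (T : K) {x y z : K} (hx : x ≠ 0)
    (hy : y ≠ 0) (hz : z ≠ 0) (hxyz : z = x * y + x + y) :
    T / x * (T / z) + T / z * (T / y) - T / x * (T / y) + T / z * T = 0 := by
  field_simp
  rw [hxyz]
  ring

section HeckeRelations

variable {R A : Type*} [CommRing R] [Ring A] [Algebra R A]

lemma mul_self_eq_of_quadratic {x : A} {t1 t2 : R}
    (hq : (x - algebraMap R A t1) * (x - algebraMap R A t2) = 0) :
    x * x = (t1 + t2) • x - (t1 * t2) • (1 : A) := by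
  rw [← sub_eq_zero, ← hq]
  simp only [Algebra.algebraMap_eq_smul_one, sub_mul, mul_sub, smul_mul_assoc, mul_smul_comm,
    one_mul, mul_one]
  module

lemma yang_baxter_of_braid {X Y : A} {a b c T u : R}
    (hX : X * X = T • X - u • (1 : A)) (hY : Y * Y = T • Y - u • (1 : A))
    (hbraid : X * Y * X = Y * X * Y) (hs : a * b + b * c - a * c + b * T = 0) :
    (X + algebraMap R A a) * (Y + algebraMap R A b) * (X + algebraMap R A c) =
      (Y + algebraMap R A c) * (X + algebraMap R A b) * (Y + algebraMap R A a) := by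
  simp only [Algebra.algebraMap_eq_smul_one, add_mul, mul_add, smul_mul_assoc, mul_smul_comm,
    one_mul, mul_one]
  rw [hX, hY, hbraid]
  match_scalars
  all_goals first
    | ring1
    | linear_combination hs
    | linear_combination -hs

end HeckeRelations

lemma mul_mul_eq_of_mul_pow_three_eq_one {G : Type*} [Group G] {a b : G} (ha : a * a = 1)
    (hb : b * b = 1) (hab : (a * b) ^ 3 = 1) : a * b * a = b * a * b := by
  have ha' : a⁻¹ = a := inv_eq_of_mul_eq_one_right ha
  have hb' : b⁻¹ = b := inv_eq_of_mul_eq_one_right hb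
  have hprod : a * b * a * (b * a * b) = 1 := by
    rw [← hab]
    simp only [pow_succ, pow_zero, one_mul, mul_assoc]
  rw [eq_inv_of_mul_eq_one_left hprod]
  simp only [mul_inv_rev, ha', hb', mul_assoc]

namespace CoxeterSystem

variable {B W : Type*} [Group W] {M : CoxeterMatrix B} (cs : CoxeterSystem M W)

lemma length_simple_mul_simple {i j : B} (hij : cs.simple i * cs.simple j ≠ 1) :
    cs.length (cs.simple i * cs.simple j) = 2 := by
  rcases cs.length_simple_mul (cs.simple j) i with h | h
  · rw [h, cs.length_simple]
  · rw [cs.length_simple, Nat.add_eq_right, cs.length_eq_zero_iff] at h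
    exact absurd h hij

lemma map_simple_mul_simple_mul_simple {H : Type*} [Monoid H] {h : W → H}
    (hmul : ∀ u v : W, cs.length (u * v) = cs.length u + cs.length v → h (u * v) = h u * h v)
    {i j k : B} (hℓ : cs.length (cs.simple i * cs.simple j * cs.simple k) = 3) :
    h (cs.simple i * cs.simple j * cs.simple k) =
      h (cs.simple i) * h (cs.simple j) * h (cs.simple k) := by
  have hle := cs.length_mul_le (cs.simple i * cs.simple j) (cs.simple k)
  have hle' := cs.length_mul_le (cs.simple i) (cs.simple j)
  simp only [cs.length_simple] at hle hle'
  have hij : cs.length (cs.simple i * cs.simple j) = 2 := by omega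
  rw [hmul _ _ (by rw [hℓ, hij, cs.length_simple]),
    hmul _ _ (by rw [hij, cs.length_simple, cs.length_simple])]

variable {R A : Type*} [CommRing R] [Ring A] [Algebra R A] {h : W → A}

lemma hecke_braid_of_orderOf_eq_three
    (hmul : ∀ u v : W, cs.length (u * v) = cs.length u + cs.length v → h (u * v) = h u * h v)
    {T u : R} {i j : B}
    (hi : h (cs.simple i) * h (cs.simple i) = T • h (cs.simple i) - u • (1 : A))
    (hj : h (cs.simple j) * h (cs.simple j) = T • h (cs.simple j) - u • (1 : A))
    (hm : orderOf (cs.simple i * cs.simple j) = 3) :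
    h (cs.simple i) * h (cs.simple j) * h (cs.simple i) =
      h (cs.simple j) * h (cs.simple i) * h (cs.simple j) := by
  have hbraid : cs.simple i * cs.simple j * cs.simple i = cs.simple j * cs.simple i * cs.simple j :=
    mul_mul_eq_of_mul_pow_three_eq_one (cs.simple_mul_simple_self i)
      (cs.simple_mul_simple_self j) (hm ▸ pow_orderOf_eq_one _)
  have hij : cs.length (cs.simple i * cs.simple j) = 2 :=
    cs.length_simple_mul_simple fun h1 ↦ by simp [orderOf_eq_one_iff.mpr h1] at hm
  have hmul_ij := hmul (cs.simple i) (cs.simple j) (by rw [hij, cs.length_simple, cs.length_simple])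
  rcases cs.length_mul_simple (cs.simple i * cs.simple j) i with h3 | h1
  · rw [hij] at h3
    rw [← cs.map_simple_mul_simple_mul_simple hmul h3, hbraid,
      cs.map_simple_mul_simple_mul_simple hmul (hbraid ▸ h3)]
  -- `ℓ(s_i s_j s_i) = 1` cannot happen, but ruling it out needs more Coxeter theory than the
  -- length function provides; instead, both sides reduce to `T h(s_i s_j) - u h(s_i s_j s_i)`.
  set w := cs.simple i * cs.simple j * cs.simple i
  have hℓw : cs.length w = 1 := by omega
  have hwsi : w * cs.simple i = cs.simple i * cs.simple j := cs.simple_mul_simple_cancel_right i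
  have hsjw : cs.simple j * w = cs.simple i * cs.simple j := by
    rw [hbraid, ← mul_assoc, ← mul_assoc, cs.simple_mul_simple_self, one_mul]
  have hright : h (cs.simple i * cs.simple j) = h w * h (cs.simple i) :=
    hwsi ▸ hmul w (cs.simple i) (by rw [hwsi, hij, hℓw, cs.length_simple])
  have hleft : h (cs.simple i * cs.simple j) = h (cs.simple j) * h w :=
    hsjw ▸ hmul (cs.simple j) w (by rw [hsjw, hij, hℓw, cs.length_simple])
  calc h (cs.simple i) * h (cs.simple j) * h (cs.simple i)
      = h w * (h (cs.simple i) * h (cs.simple i)) := by rw [← hmul_ij, hright, mul_assoc]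
    _ = T • h (cs.simple i * cs.simple j) - u • h w := by
      rw [hi, mul_sub, mul_smul_comm, mul_smul_comm, mul_one, ← hright]
    _ = h (cs.simple j) * h (cs.simple j) * h w := by
      rw [hj, sub_mul, smul_mul_assoc, smul_mul_assoc, one_mul, ← hleft]
    _ = h (cs.simple j) * h (cs.simple i) * h (cs.simple j) := by
      rw [mul_assoc, ← hleft, hmul_ij, mul_assoc]

end CoxeterSystem

theorem yang_baxter_relation_m_eq_three_general
    {r : ℕ} {W : Type*} [Group W] {M : CoxeterMatrix (Fin r)} (cs : CoxeterSystem M W)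
    {Λ : Type*} [AddCommGroup Λ]
    {K : Type*} [Field K] (exp : Multiplicative Λ →* Kˣ)
    (hexp_inj : Function.Injective exp) (t1 t2 : K)
    {H : Type*} [Ring H] [Algebra K H]
    (h : W → H)
    (hmul : ∀ u v : W, cs.length (u * v) = cs.length u + cs.length v →
      h (u * v) = h u * h v)
    (hquad : ∀ i : Fin r,
      (h (cs.simple i) - algebraMap K H t1) * (h (cs.simple i) - algebraMap K H t2) = 0)
    (i j : Fin r) (hm : orderOf (cs.simple i * cs.simple j) = 3)
    (lam nu : Λ) (hlam : lam ≠ 0) (hnu : nu ≠ 0) (hln : lam + nu ≠ 0) :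
    YBfactor cs exp t1 t2 h i lam * YBfactor cs exp t1 t2 h j (lam + nu) *
        YBfactor cs exp t1 t2 h i nu =
      YBfactor cs exp t1 t2 h j nu * YBfactor cs exp t1 t2 h i (lam + nu) *
        YBfactor cs exp t1 t2 h j lam := by
  have hi := mul_self_eq_of_quadratic (hquad i)
  have hj := mul_self_eq_of_quadratic (hquad j)
  exact yang_baxter_of_braid hi hj (cs.hecke_braid_of_orderOf_eq_three hmul hi hj hm)
    (yang_baxter_scalar_identity (t1 + t2) (Eelt_ne_zero hexp_inj hlam)
      (Eelt_ne_zero hexp_inj hnu) (Eelt_ne_zero hexp_inj hln) (Eelt_add exp lam nu))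

/-- the Yang–Baxter relation for `m_{i,j} = 3`:
`h_i(λ) h_j(λ+ν) h_i(ν) = h_j(ν) h_i(λ+ν) h_j(λ)`. -/
theorem yang_baxter_relation_m_eq_three
    {r : ℕ} {W : Type*} [Group W] {M : CoxeterMatrix (Fin r)} (cs : CoxeterSystem M W)
    {Λ : Type*} [AddCommGroup Λ] (α : Fin r → Λ)
    {K : Type*} [Field K] (exp : Multiplicative Λ →* Kˣ)
    (hexp_inj : Function.Injective exp) (t1 t2 : K)
    {H : Type*} [Ring H] [Algebra K H]
    (h : W → H) (hb : Module.Basis W K H)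
    (hbasis : ∀ w : W, hb w = h w)
    (hone : h 1 = 1)
    (hmul : ∀ u v : W, cs.length (u * v) = cs.length u + cs.length v →
      h (u * v) = h u * h v)
    (hquad : ∀ i : Fin r,
      (h (cs.simple i) - algebraMap K H t1) * (h (cs.simple i) - algebraMap K H t2) = 0)
    (i j : Fin r) (hm : orderOf (cs.simple i * cs.simple j) = 3)
    (lam nu : Λ) (hlam : lam ≠ 0) (hnu : nu ≠ 0) (hln : lam + nu ≠ 0) :
    YBfactor cs exp t1 t2 h i lam * YBfactor cs exp t1 t2 h j (lam + nu) *
        YBfactor cs exp t1 t2 h i nu =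
      YBfactor cs exp t1 t2 h j nu * YBfactor cs exp t1 t2 h i (lam + nu) *
        YBfactor cs exp t1 t2 h j lam :=
  yang_baxter_relation_m_eq_three_general cs exp hexp_inj t1 t2 h hmul hquad i j hm lam nu hlam hnu
    hln
end

section
/- For every v ∈ W, Ω(Y_{w0 v w0}) = ⋆[w0(Y_v)], where w0 is the longest element of W, Ω: H → H is the Q_{t1,t2}(Λ)-algebra homomorphism determined by Ω(h_w) = h_{w0 w w0}, and ⋆ and the w0-action are applied only to the coefficients in Q_{t1,t2}(Λ) when Y_v is written in the basis {h_w}. -/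
open CoxeterSystem

/-- Apply a map `φ` to all the coefficients of `f` in the standard basis `{h_w}`. -/
noncomputable def mapCoeff {W : Type*} [Fintype W] {K : Type*} [Field K]
    {H : Type*} [Ring H] [Algebra K H] (hb : Module.Basis W K H) (h : W → H) (φ : K → K) (f : H) : H :=
  ∑ x : W, φ (hb.repr f x) • h x

/-- The `Q_{t1,t2}(Λ)`-linear map `Ω` determined by `Ω(h_w) = h_{w0 w w0}`
(this map is in fact an algebra homomorphism). -/
noncomputable def OmegaMap {W : Type*} [Group W] [Fintype W] {K : Type*} [Field K]
    {H : Type*} [Ring H] [Algebra K H] (hb : Module.Basis W K H) (h : W → H) (w0 : W) (f : H) : H :=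
  ∑ x : W, hb.repr f x • h (w0 * x * w0)

/-!
Write `σ x = w₀ x w₀`. Positivity of roots (`w α_j` is a nonnegative combination of simple roots
when `ℓ (w s_j) > ℓ w`, Humphreys 5.4) shows that `w₀` sends every simple root to a negative
combination, whence `w₀² = 1`, `ℓ ∘ σ = ℓ`, and `σ s_i = s_j` with `w₀ α_j = -α_i`.
Both `Ω` and `f ↦ ⋆w₀(f)` are of the form `∑ c_x h_x ↦ ∑ φ(c_x) h_{σ x}` with `φ` fixing
`t₁, t₂`, so they intertwine right multiplication by `h_{s_j}` resp. `h_{s_i}` with right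
multiplication by `h_{s_i}`. Inducting along a reduced word, `Y_{v s_i} = Y_v (h_{s_i} + c)` and
`Y_{σ(v s_i)} = Y_{σ v} (h_{s_j} + c')`, and `c' = ⋆w₀(c)` because `(σ v) α_j = -w₀ v α_i` and
`⋆ E(λ) = E(-λ)`.
-/

instance instCoeFunMultiplicativeAddAut {Λ : Type*} [AddCommGroup Λ] :
    CoeFun (Multiplicative (AddAut Λ)) (fun _ => Λ → Λ) :=
  ⟨fun f => ⇑(Multiplicative.toAdd f : AddAut Λ)⟩

lemma toAdd_map_mul_apply {W Λ : Type*} [Group W] [AddCommGroup Λ]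
    (wΛ : W →* Multiplicative (AddAut Λ)) (g g' : W) (lam : Λ) :
    wΛ (g * g') lam = wΛ g (wΛ g' lam) := by
  rw [map_mul, toAdd_mul, AddAut.add_apply]

lemma mul_mul_mul_of_mul_self_eq_one {G : Type*} [Group G] {a : G} (ha : a * a = 1) (x y : G) :
    a * (x * y) * a = a * x * a * (a * y * a) :=
  calc a * (x * y) * a = a * x * (a * a) * y * a := by rw [ha]; group
    _ = a * x * a * (a * y * a) := by group

namespace CoxeterSystem

variable {B W : Type*} [Group W] {M : CoxeterMatrix B} (cs : CoxeterSystem M W)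

theorem induction_mul_simple {p : W → Prop} (one : p 1)
    (mul_simple : ∀ w i, cs.length (w * cs.simple i) = cs.length w + 1 → p w →
      p (w * cs.simple i)) (w : W) : p w := by
  induction hw : cs.length w using Nat.strong_induction_on generalizing w with
  | _ N ih =>
  by_cases hw1 : w = 1
  · exact hw1 ▸ one
  obtain ⟨i, hi⟩ := cs.exists_rightDescent_of_ne_one hw1
  have hlen := cs.isRightDescent_iff.mp hi
  rw [← cs.simple_mul_simple_cancel_right (w := w) i]
  exact mul_simple _ i (by rw [cs.simple_mul_simple_cancel_right]; omega) (ih _ (by omega) _ rfl)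

lemma isRightDescent_of_forall_length_le {w₀ : W} (hw₀ : ∀ u, cs.length u ≤ cs.length w₀)
    (i : B) : cs.IsRightDescent w₀ i :=
  lt_of_le_of_ne (hw₀ _) (cs.length_mul_simple_ne w₀ i)

lemma wordProd_alternatingWord_mul_simple_eq (i i' : B) (n : ℕ) :
    cs.wordProd (alternatingWord i i' (n + 1)) * cs.simple i' =
      cs.wordProd (alternatingWord i' i n) := by
  rw [alternatingWord_succ, wordProd_concat, simple_mul_simple_cancel_right]

lemma wordProd_alternatingWord_eq_swap (i i' : B) :
    cs.wordProd (alternatingWord i i' (M.M i i')) =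
      cs.wordProd (alternatingWord i' i (M.M i i')) := by
  simpa only [braidWord, M.symmetric i' i] using cs.wordProd_braidWord_eq i i'

lemma length_mul_wordProd_alternatingWord_le (v : W) (i i' : B) (n : ℕ) :
    cs.length (v * cs.wordProd (alternatingWord i i' n)) ≤ cs.length v + n := by
  have := cs.length_wordProd_le (alternatingWord i i' n)
  rw [length_alternatingWord] at this
  have := cs.length_mul_le v (cs.wordProd (alternatingWord i i' n))
  omega

lemma exists_wordProd_alternatingWord_mul_simple {i i' x : B} (hx : x = i ∨ x = i')
    (hm : 1 ≤ M.M i i') {n : ℕ} (hn : n ≤ M.M i i') :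
    ∃ n' ≤ M.M i i', n' ≤ n + 1 ∧
      (cs.wordProd (alternatingWord i i' n) * cs.simple x = cs.wordProd (alternatingWord i i' n') ∨
        cs.wordProd (alternatingWord i i' n) * cs.simple x =
          cs.wordProd (alternatingWord i' i n')) := by
  match n, hx with
  | 0, .inl rfl => exact ⟨1, hm, le_rfl, .inr (by simp [alternatingWord])⟩
  | 0, .inr rfl => exact ⟨1, hm, le_rfl, .inl (by simp [alternatingWord])⟩
  | p + 1, .inr rfl =>
    exact ⟨p, by omega, by omega, .inr (cs.wordProd_alternatingWord_mul_simple_eq _ _ p)⟩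
  | p + 1, .inl rfl =>
    rcases Nat.lt_or_ge (p + 1) (M.M x i') with hp | hp
    · refine ⟨p + 2, hp, le_rfl, .inr ?_⟩
      rw [alternatingWord_succ i' x (p + 1), wordProd_concat]
    · have hpm : p + 1 = M.M x i' := by omega
      refine ⟨p, by omega, by omega, .inl ?_⟩
      rw [hpm, wordProd_alternatingWord_eq_swap, ← hpm, wordProd_alternatingWord_mul_simple_eq]

lemma exists_eq_mul_wordProd_alternatingWord {j k : B} (hm : 1 ≤ M.M j k) (w : W) :
    ∃ v n, n ≤ M.M j k ∧ ¬cs.IsRightDescent v j ∧ ¬cs.IsRightDescent v k ∧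
      cs.length v + n ≤ cs.length w ∧
      (w = v * cs.wordProd (alternatingWord j k n) ∨
        w = v * cs.wordProd (alternatingWord k j n)) := by
  induction hw : cs.length w using Nat.strong_induction_on generalizing w with
  | _ N ih =>
  by_cases hd : ∃ x, (x = j ∨ x = k) ∧ cs.IsRightDescent w x
  · obtain ⟨x, hx, hwx⟩ := hd
    have hlen := cs.isRightDescent_iff.mp hwx
    obtain ⟨v, n, hn, hvj, hvk, hvn, hw'⟩ := ih _ (by omega) (w * cs.simple x) rfl
    have hw : w = w * cs.simple x * cs.simple x := (cs.simple_mul_simple_cancel_right x).symm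
    rcases hw' with hw' | hw'
    · obtain ⟨n', hn', hnn', he⟩ := cs.exists_wordProd_alternatingWord_mul_simple hx hm hn
      refine ⟨v, n', hn', hvj, hvk, by omega, ?_⟩
      rw [hw, hw', mul_assoc]
      rcases he with he | he <;> simp [he]
    · rw [M.symmetric] at hm hn
      obtain ⟨n', hn', hnn', he⟩ := cs.exists_wordProd_alternatingWord_mul_simple hx.symm hm hn
      refine ⟨v, n', M.symmetric j k ▸ hn', hvj, hvk, by omega, ?_⟩
      rw [hw, hw', mul_assoc]
      rcases he with he | he <;> simp [he]
  · simp only [not_exists, not_and] at hd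
    exact ⟨w, 0, by omega, hd j (.inl rfl), hd k (.inr rfl), by omega,
      .inl (by simp [alternatingWord])⟩

end CoxeterSystem

section RootCone

variable {B Λ : Type*} [AddCommGroup Λ] (α : B → Λ)

def rootCone : AddSubmonoid Λ := AddSubmonoid.closure (Set.range α)

variable {α}

lemma root_mem_rootCone (i : B) : α i ∈ rootCone α :=
  AddSubmonoid.subset_closure (Set.mem_range_self i)

lemma zsmul_mem_rootCone {n : ℤ} (hn : 0 ≤ n) {x : Λ} (hx : x ∈ rootCone α) :
    n • x ∈ rootCone α := by
  lift n to ℕ using hn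
  rw [natCast_zsmul]
  exact AddSubmonoid.nsmul_mem _ hx _

variable [Fintype B] (hindep : LinearIndependent ℤ α)
include hindep

lemma eq_zero_of_mem_rootCone_of_neg_mem {x : Λ} (hx : x ∈ rootCone α)
    (hx' : -x ∈ rootCone α) : x = 0 := by
  obtain ⟨a, rfl⟩ := AddSubmonoid.mem_closure_range_iff_of_fintype.mp hx
  obtain ⟨b, hb⟩ := AddSubmonoid.mem_closure_range_iff_of_fintype.mp hx'
  have hsum : ∑ t, ((a t + b t : ℕ) : ℤ) • α t = 0 := by
    simp only [natCast_zsmul, add_smul, Finset.sum_add_distrib, ← hb, add_neg_cancel]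
  have ha : ∀ t, a t = 0 := fun t => by
    have := Fintype.linearIndependent_iff.mp hindep _ hsum t
    omega
  simp [ha]

lemma exists_nsmul_eq_of_two_smul_eq {x : Λ} (hx : x ∈ rootCone α) {c : ℤ} {j : B}
    (h : (2 : ℤ) • x = c • α j) : ∃ n : ℕ, x = n • α j := by
  classical
  obtain ⟨a, rfl⟩ := AddSubmonoid.mem_closure_range_iff_of_fintype.mp hx
  have hsum : ∑ t, (2 * (a t : ℤ) - (Pi.single j c : B → ℤ) t) • α t = 0 := by
    simp only [sub_smul, Finset.sum_sub_distrib, mul_smul, natCast_zsmul, ← Finset.smul_sum,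
      h, Pi.single_apply, ite_smul, zero_smul, Finset.sum_ite_eq', Finset.mem_univ, if_true,
      sub_self]
  have ha : ∀ t ≠ j, a t = 0 := fun t ht => by
    have := Fintype.linearIndependent_iff.mp hindep _ hsum t
    rw [Pi.single_eq_of_ne ht] at this
    omega
  exact ⟨a j, Fintype.sum_eq_single j fun t ht => by rw [ha t ht, zero_smul]⟩

lemma zsmul_root_injective (i : B) : Function.Injective (fun n : ℤ => n • α i) := by
  classical
  intro m n h
  have hsum : ∑ t, (Pi.single i (m - n) : B → ℤ) t • α t = 0 := by
    simpa [Pi.single_apply, sub_smul, sub_eq_zero] using h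
  have := Fintype.linearIndependent_iff.mp hindep _ hsum i
  simp only [Pi.single_eq_same] at this
  omega

end RootCone

-- `m = m_{ij}` and `a, b` the off-diagonal Cartan entries of `A₁ × A₁`, `A₂`, `B₂` or `G₂`.
def IsFiniteTypeRankTwo (m : ℕ) (a b : ℤ) : Prop :=
  (m = 2 ∧ a = 0 ∧ b = 0) ∨ (m = 3 ∧ a = -1 ∧ b = -1) ∨
    (m = 4 ∧ a * b = 2 ∧ a < 0 ∧ b < 0) ∨ (m = 6 ∧ a * b = 3 ∧ a < 0 ∧ b < 0)

lemma IsFiniteTypeRankTwo.two_le {m : ℕ} {a b : ℤ} (h : IsFiniteTypeRankTwo m a b) : 2 ≤ m := by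
  rcases h with ⟨rfl, -⟩ | ⟨rfl, -⟩ | ⟨rfl, -⟩ | ⟨rfl, -⟩ <;> norm_num

-- The coordinates of `cs.wordProd (alternatingWord j k n) (α j)` in the basis `α j, α k`,
-- where `a = ⟨α k, α j^∨⟩` and `b = ⟨α j, α k^∨⟩`.
def dihedralCoeffs (a b : ℤ) : ℕ → ℤ × ℤ
  | 0 => (1, 0)
  | n + 1 =>
    let c := dihedralCoeffs a b n
    if Even n then (c.1, -b * c.1 - c.2) else (-c.1 - a * c.2, c.2)

lemma dihedralCoeffs_nonneg {m : ℕ} {a b : ℤ} (h : IsFiniteTypeRankTwo m a b) {n : ℕ}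
    (hn : n < m) : 0 ≤ (dihedralCoeffs a b n).1 ∧ 0 ≤ (dihedralCoeffs a b n).2 := by
  rcases h with ⟨rfl, rfl, rfl⟩ | ⟨rfl, rfl, rfl⟩ | ⟨rfl, hab, ha, hb⟩ | ⟨rfl, hab, ha, hb⟩
  · revert n; decide
  · revert n; decide
  · obtain ⟨ha', hb'⟩ : -2 ≤ a ∧ -2 ≤ b := ⟨by nlinarith, by nlinarith⟩
    interval_cases a <;> interval_cases b <;> first | omega | (revert n; decide)
  · obtain ⟨ha', hb'⟩ : -3 ≤ a ∧ -3 ≤ b := ⟨by nlinarith, by nlinarith⟩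
    interval_cases a <;> interval_cases b <;> first | omega | (revert n; decide)

structure IsRootAction {B W Λ : Type*} [Group W] [AddCommGroup Λ] {M : CoxeterMatrix B}
    (cs : CoxeterSystem M W) (wΛ : W →* Multiplicative (AddAut Λ)) (α : B → Λ)
    (coroot : B → Λ →+ ℤ) : Prop where
  simple_apply : ∀ i lam, wΛ (cs.simple i) lam = lam - coroot i lam • α i
  coroot_root : ∀ i, coroot i (α i) = 2
  cartan : ∀ i j, i ≠ j → IsFiniteTypeRankTwo (M.M i j) (coroot i (α j)) (coroot j (α i))

namespace IsRootAction

variable {B W Λ : Type*} [Group W] [AddCommGroup Λ] {M : CoxeterMatrix B}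
  {cs : CoxeterSystem M W} {wΛ : W →* Multiplicative (AddAut Λ)} {α : B → Λ}
  {coroot : B → Λ →+ ℤ} (hR : IsRootAction cs wΛ α coroot)
include hR

lemma simple_apply_root (i : B) : wΛ (cs.simple i) (α i) = -α i := by
  rw [hR.simple_apply, hR.coroot_root]
  module

lemma wordProd_alternatingWord_apply (j k : B) (n : ℕ) :
    wΛ (cs.wordProd (alternatingWord j k n)) (α j) =
      (dihedralCoeffs (coroot j (α k)) (coroot k (α j)) n).1 • α j +
        (dihedralCoeffs (coroot j (α k)) (coroot k (α j)) n).2 • α k := by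
  induction n with
  | zero => simp [alternatingWord, dihedralCoeffs]
  | succ n ih =>
    rw [alternatingWord_succ', wordProd_cons, toAdd_map_mul_apply, ih, dihedralCoeffs]
    split_ifs <;>
    · simp only [hR.simple_apply, map_add, map_zsmul, hR.coroot_root, smul_eq_mul]
      module

/-- Humphreys, *Reflection groups and Coxeter groups*, Theorem 5.4: split off from `w` a maximal
right factor in the rank-two parabolic subgroup `⟨s_j, s_k⟩`, where `s_k` is a right descent. -/
theorem apply_root_mem_rootCone {w : W} {j : B} (hj : ¬cs.IsRightDescent w j) :
    wΛ w (α j) ∈ rootCone α := by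
  induction hw : cs.length w using Nat.strong_induction_on generalizing w j with
  | _ N ih =>
  by_cases hw1 : w = 1
  · simpa [hw1] using root_mem_rootCone j
  obtain ⟨k, hk⟩ := cs.exists_rightDescent_of_ne_one hw1
  have hjk : j ≠ k := by rintro rfl; exact hj hk
  have hm := (hR.cartan j k hjk).two_le
  obtain ⟨v, n, hn, hvj, hvk, hvn, hwv⟩ :=
    cs.exists_eq_mul_wordProd_alternatingWord (j := j) (k := k) (by omega) w
  have hj' := cs.not_isRightDescent_iff.mp hj
  have hn0 : n ≠ 0 := by
    rintro rfl
    have : w = v := by simpa [alternatingWord] using hwv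
    exact hvk (this ▸ hk)
  -- a factor ending in `s_j` would make `j` a right descent of `w`
  have ends_j : ∀ p, w = v * cs.wordProd (alternatingWord k j (p + 1)) → n < p := by
    intro p hp
    have := cs.length_mul_wordProd_alternatingWord_le v j k p
    rw [← cs.wordProd_alternatingWord_mul_simple_eq, ← mul_assoc, ← hp] at this
    omega
  have hwv' : w = v * cs.wordProd (alternatingWord j k n) ∧ n < M.M j k := by
    obtain ⟨p, rfl⟩ := Nat.exists_eq_succ_of_ne_zero hn0
    rcases hwv with hwv | hwv
    · refine ⟨hwv, lt_of_le_of_ne hn fun hnm => ?_⟩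
      rw [hnm, cs.wordProd_alternatingWord_eq_swap, ← hnm] at hwv
      exact absurd (ends_j p hwv) (by omega)
    · exact absurd (ends_j p hwv) (by omega)
  obtain ⟨hp, hq⟩ := dihedralCoeffs_nonneg (hR.cartan j k hjk) hwv'.2
  rw [hwv'.1, toAdd_map_mul_apply, hR.wordProd_alternatingWord_apply, map_add, map_zsmul,
    map_zsmul]
  have hvl : cs.length v < N := by omega
  exact add_mem (zsmul_mem_rootCone hp (ih _ hvl hvj rfl))
    (zsmul_mem_rootCone hq (ih _ hvl hvk rfl))

theorem neg_apply_root_mem_rootCone {w : W} {j : B} (hj : cs.IsRightDescent w j) :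
    -wΛ w (α j) ∈ rootCone α := by
  have := hR.apply_root_mem_rootCone (cs.isRightDescent_iff_not_isRightDescent_mul.mp hj)
  rwa [toAdd_map_mul_apply, hR.simple_apply_root, map_neg] at this

lemma neg_apply_mem_rootCone {g : W} (hg : ∀ i, cs.IsRightDescent g i) {x : Λ}
    (hx : x ∈ rootCone α) : -wΛ g x ∈ rootCone α := by
  induction hx using AddSubmonoid.closure_induction with
  | mem x hx =>
    obtain ⟨i, rfl⟩ := hx
    exact hR.neg_apply_root_mem_rootCone (hg i)
  | zero => simp
  | add x y _ _ hx hy =>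
    rw [map_add, neg_add]
    exact add_mem hx hy

lemma two_smul_apply_root_eq {g : W} {i j : B} (h : g * cs.simple i * g⁻¹ = cs.simple j) :
    (2 : ℤ) • wΛ g (α i) = coroot j (wΛ g (α i)) • α j := by
  have hs : wΛ (cs.simple j) (wΛ g (α i)) = -wΛ g (α i) := by
    rw [← h, toAdd_map_mul_apply, toAdd_map_mul_apply, ← toAdd_map_mul_apply wΛ g⁻¹,
      inv_mul_cancel]
    simp [hR.simple_apply_root]
  rw [hR.simple_apply, ← sub_eq_zero] at hs
  rw [← sub_eq_zero, ← hs]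
  module

section LinearIndependent

variable [Fintype B] (hindep : LinearIndependent ℤ α)
include hindep

theorem isRightDescent_of_neg_apply_root_mem {w : W} {j : B} (h : -wΛ w (α j) ∈ rootCone α) :
    cs.IsRightDescent w j := by
  by_contra hj
  have h0 := eq_zero_of_mem_rootCone_of_neg_mem hindep (hR.apply_root_mem_rootCone hj) h
  exact hindep.ne_zero j ((Multiplicative.toAdd (wΛ w)).injective (h0.trans (map_zero _).symm))

variable {w₀ : W} (hw₀ : ∀ u, cs.length u ≤ cs.length w₀)
include hw₀

theorem length_longest_mul_add_length (u : W) :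
    cs.length (w₀ * u) + cs.length u = cs.length w₀ := by
  induction u using cs.induction_mul_simple with
  | one => simp
  | mul_simple u i hui ih =>
    have hu := hR.apply_root_mem_rootCone (cs.not_isRightDescent_iff.mpr hui)
    have hdesc : cs.IsRightDescent (w₀ * u) i := by
      refine hR.isRightDescent_of_neg_apply_root_mem hindep ?_
      rw [toAdd_map_mul_apply]
      exact hR.neg_apply_mem_rootCone (cs.isRightDescent_of_forall_length_le hw₀) hu
    have := cs.isRightDescent_iff.mp hdesc
    rw [← mul_assoc]
    omega

theorem longest_mul_self : w₀ * w₀ = 1 := by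
  have := hR.length_longest_mul_add_length hindep hw₀ w₀
  exact cs.length_eq_zero_iff.mp (by omega)

theorem length_longest_mul_mul_longest (x : W) : cs.length (w₀ * x * w₀) = cs.length x := by
  have hinv : w₀⁻¹ = w₀ := inv_eq_of_mul_eq_one_right (hR.longest_mul_self hindep hw₀)
  have h1 := hR.length_longest_mul_add_length hindep hw₀ (x * w₀)
  have h2 := hR.length_longest_mul_add_length hindep hw₀ x⁻¹
  rw [← cs.length_inv (x * w₀), mul_inv_rev, hinv] at h1
  rw [cs.length_inv] at h2
  rw [mul_assoc]
  omega

theorem exists_longest_mul_simple_mul_longest (i : B) :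
    ∃ j, w₀ * cs.simple i * w₀ = cs.simple j ∧ w₀ * cs.simple j * w₀ = cs.simple i ∧
      wΛ w₀ (α j) = -α i := by
  have hsq := hR.longest_mul_self hindep hw₀
  have hinv : w₀⁻¹ = w₀ := inv_eq_of_mul_eq_one_right hsq
  obtain ⟨j, hj⟩ := cs.length_eq_one_iff.mp
    ((hR.length_longest_mul_mul_longest hindep hw₀ _).trans (cs.length_simple i))
  have hj' : w₀ * cs.simple j * w₀ = cs.simple i := by
    rw [← hj, ← mul_assoc, ← mul_assoc, hsq, one_mul, mul_assoc, hsq, mul_one]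
  -- `w₀` sends `α_i` to a negative multiple of `α_j` and vice versa; since `w₀² = 1` both
  -- multiples are `1`
  have neg_multiple : ∀ {i j : B}, w₀ * cs.simple i * w₀ = cs.simple j →
      ∃ d : ℕ, -wΛ w₀ (α i) = d • α j := fun {i j} h => by
    refine exists_nsmul_eq_of_two_smul_eq hindep
      (hR.neg_apply_root_mem_rootCone (cs.isRightDescent_of_forall_length_le hw₀ i))
      (c := -coroot j (wΛ w₀ (α i))) ?_
    rw [smul_neg, hR.two_smul_apply_root_eq (by rwa [hinv]), neg_smul]
  obtain ⟨d, hd⟩ := neg_multiple hj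
  obtain ⟨e, he⟩ := neg_multiple hj'
  have hde : (1 : ℤ) • α i = ((d * e : ℕ) : ℤ) • α i := by
    calc (1 : ℤ) • α i = wΛ w₀ (wΛ w₀ (α i)) := by rw [← toAdd_map_mul_apply, hsq]; simp
      _ = ((d * e : ℕ) : ℤ) • α i := by
        rw [← neg_neg (wΛ w₀ (α i)), hd, map_neg, map_nsmul, ← neg_nsmul, he, natCast_zsmul,
          mul_nsmul']
  have he1 : e = 1 := by
    have := zsmul_root_injective hindep i hde
    exact Nat.eq_one_of_mul_eq_one_left (by exact_mod_cast this.symm)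
  exact ⟨j, hj, hj', by rw [← neg_neg (wΛ w₀ (α j)), he, he1, one_smul]⟩

end LinearIndependent

end IsRootAction

section HeckeRelations

variable {B W K H : Type*} [Group W] {M : CoxeterMatrix B} (cs : CoxeterSystem M W) [Field K]
  [Ring H] [Algebra K H] {h : W → H} {t₁ t₂ : K}
  (hquad : ∀ i, (h (cs.simple i) - algebraMap K H t₁) * (h (cs.simple i) - algebraMap K H t₂) = 0)
include hquad

lemma simple_mul_self_eq (i : B) :
    h (cs.simple i) * h (cs.simple i) = (t₁ + t₂) • h (cs.simple i) - (t₁ * t₂) • (1 : H) := by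
  have := hquad i
  rw [sub_mul, mul_sub, mul_sub, ← Algebra.commutes t₂, ← Algebra.smul_def, ← Algebra.smul_def,
    ← map_mul, Algebra.algebraMap_eq_smul_one] at this
  rw [← sub_eq_zero, ← this]
  module

variable (hmul : ∀ u v, cs.length (u * v) = cs.length u + cs.length v → h (u * v) = h u * h v)
include hmul

lemma mul_simple_of_isRightDescent {x : W} {i : B} (hx : cs.IsRightDescent x i) :
    h x * h (cs.simple i) = (t₁ + t₂) • h x - (t₁ * t₂) • h (x * cs.simple i) := by
  have hx' : h x = h (x * cs.simple i) * h (cs.simple i) := by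
    conv_lhs => rw [← cs.simple_mul_simple_cancel_right (w := x) i]
    refine hmul _ _ ?_
    rw [cs.simple_mul_simple_cancel_right, cs.length_simple]
    exact (cs.isRightDescent_iff.mp hx).symm
  rw [hx', mul_assoc, simple_mul_self_eq cs hquad, mul_sub, mul_smul_comm, mul_smul_comm, mul_one]

end HeckeRelations

section TwistMap

variable {W K H : Type*} [Fintype W] [Field K] [Ring H] [Algebra K H] (h : W → H)
  (hb : Module.Basis W K H)

-- `OmegaMap` and `mapCoeff` are the cases `(RingHom.id K, (w₀ * · * w₀))` and `(φ, id)`.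
noncomputable def twistMap (φ : K →+* K) (σ : W → W) : H →ₛₗ[φ] H where
  toFun f := ∑ x, φ (hb.repr f x) • h (σ x)
  map_add' f g := by simp [add_smul, Finset.sum_add_distrib]
  map_smul' c f := by simp [Finset.smul_sum, smul_smul]

lemma twistMap_mul_algebraMap (φ : K →+* K) (σ : W → W) (f : H) (c : K) :
    twistMap h hb φ σ (f * algebraMap K H c) = φ c • twistMap h hb φ σ f := by
  rw [← Algebra.commutes, ← Algebra.smul_def, map_smulₛₗ]

variable {h hb} (hbasis : ∀ w, hb w = h w)
include hbasis

lemma twistMap_apply_basis (φ : K →+* K) (σ : W → W) (x : W) :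
    twistMap h hb φ σ (h x) = h (σ x) := by
  classical
  rw [← hbasis, twistMap, LinearMap.coe_mk, AddHom.coe_mk, hb.repr_self,
    Fintype.sum_eq_single x fun y hy => by simp [Finsupp.single_eq_of_ne hy]]
  simp

variable {B : Type*} [Group W] {M : CoxeterMatrix B} (cs : CoxeterSystem M W) {t₁ t₂ : K}
  (hquad : ∀ i, (h (cs.simple i) - algebraMap K H t₁) * (h (cs.simple i) - algebraMap K H t₂) = 0)
  (hmul : ∀ u v, cs.length (u * v) = cs.length u + cs.length v → h (u * v) = h u * h v)
include hquad hmul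

lemma twistMap_mul_simple {φ : K →+* K} (hφ₁ : φ t₁ = t₁) (hφ₂ : φ t₂ = t₂) {σ : W → W}
    {i j : B} (hσ : ∀ x, σ (x * cs.simple i) = σ x * cs.simple j)
    (hℓ : ∀ x, cs.length (σ x) = cs.length x) (f : H) :
    twistMap h hb φ σ (f * h (cs.simple i)) = twistMap h hb φ σ f * h (cs.simple j) := by
  suffices ((twistMap h hb φ σ).comp (LinearMap.mulRight K (h (cs.simple i))) : H →ₛₗ[φ] H) =
      (LinearMap.mulRight K (h (cs.simple j))).comp (twistMap h hb φ σ) from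
    DFunLike.congr_fun this f
  refine hb.ext fun x => ?_
  simp only [LinearMap.comp_apply, LinearMap.mulRight_apply, hbasis, twistMap_apply_basis hbasis]
  rcases cs.length_mul_simple x i with hup | hdown
  · rw [← hmul x _ (by rw [cs.length_simple, hup]), twistMap_apply_basis hbasis, hσ]
    exact hmul _ _ (by rw [← hσ, hℓ, hℓ, cs.length_simple, hup])
  · have hσx : cs.IsRightDescent (σ x) j := by
      rw [CoxeterSystem.IsRightDescent, ← hσ, hℓ, hℓ]
      omega
    rw [mul_simple_of_isRightDescent cs hquad hmul (cs.isRightDescent_iff.mpr hdown),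
      mul_simple_of_isRightDescent cs hquad hmul hσx, map_sub, map_smulₛₗ, map_smulₛₗ,
      twistMap_apply_basis hbasis, twistMap_apply_basis hbasis, map_add, map_mul, hφ₁, hφ₂, hσ]

end TwistMap

section Eelt

variable {Λ K : Type*} [AddCommGroup Λ] [Field K] {exp : Multiplicative Λ →* Kˣ}

lemma map_Eelt {W : Type*} [Group W] {wΛ : W →* Multiplicative (AddAut Λ)}
    {wK : W →* RingAut K}
    (hwexp : ∀ (w : W) (lam : Λ), wK w ((exp (Multiplicative.ofAdd lam) : Kˣ) : K) =
      ((exp (Multiplicative.ofAdd (wΛ w lam)) : Kˣ) : K)) (w : W) (lam : Λ) :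
    wK w (Eelt exp lam) = Eelt exp (wΛ w lam) := by
  rw [Eelt, Eelt, map_sub, map_one, hwexp, map_neg]

lemma star_Eelt {star : K →+* K}
    (hstar_exp : ∀ lam : Λ, star ((exp (Multiplicative.ofAdd lam) : Kˣ) : K) =
      ((exp (Multiplicative.ofAdd (-lam)) : Kˣ) : K)) (lam : Λ) :
    star (Eelt exp lam) = Eelt exp (-lam) := by
  rw [Eelt, Eelt, map_sub, map_one, hstar_exp]

end Eelt

theorem omega_yang_baxter_eq_star_w0_general
    {r : ℕ} {W : Type*} [Group W] [Fintype W] {M : CoxeterMatrix (Fin r)}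
    (cs : CoxeterSystem M W)
    {Λ : Type*} [AddCommGroup Λ] (wΛ : W →* Multiplicative (AddAut Λ)) (α : Fin r → Λ)
    (coroot : Fin r → (Λ →+ ℤ))
    (hact : ∀ (i : Fin r) (lam : Λ), Multiplicative.toAdd (wΛ (cs.simple i)) lam = lam - (coroot i lam) • α i)
    (hαα : ∀ i : Fin r, coroot i (α i) = 2)
    (hindep : LinearIndependent ℤ α)
    (hcart : ∀ i j : Fin r, i ≠ j →
      (M.M i j = 2 ∧ coroot i (α j) = 0 ∧ coroot j (α i) = 0) ∨
      (M.M i j = 3 ∧ coroot i (α j) = -1 ∧ coroot j (α i) = -1) ∨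
      (M.M i j = 4 ∧ coroot i (α j) * coroot j (α i) = 2 ∧
        coroot i (α j) < 0 ∧ coroot j (α i) < 0) ∨
      (M.M i j = 6 ∧ coroot i (α j) * coroot j (α i) = 3 ∧
        coroot i (α j) < 0 ∧ coroot j (α i) < 0))
    {K : Type*} [Field K] (exp : Multiplicative Λ →* Kˣ)
    (t1 t2 : K) (wK : W →* RingAut K)
    (hwexp : ∀ (w : W) (lam : Λ),
      wK w ((exp (Multiplicative.ofAdd lam) : Kˣ) : K)
        = ((exp (Multiplicative.ofAdd (Multiplicative.toAdd (wΛ w) lam)) : Kˣ) : K))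
    (hwt1 : ∀ w : W, wK w t1 = t1) (hwt2 : ∀ w : W, wK w t2 = t2)
    {H : Type*} [Ring H] [Algebra K H]
    (h : W → H) (hb : Module.Basis W K H)
    (hbasis : ∀ w : W, hb w = h w)
    (hone : h 1 = 1)
    (hmul : ∀ u v : W, cs.length (u * v) = cs.length u + cs.length v →
      h (u * v) = h u * h v)
    (hquad : ∀ i : Fin r,
      (h (cs.simple i) - algebraMap K H t1) * (h (cs.simple i) - algebraMap K H t2) = 0)
    (Y : W → H) (hY1 : Y 1 = 1)
    (hYrec : ∀ (w : W) (i : Fin r), cs.length (w * cs.simple i) = cs.length w + 1 →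
      Y (w * cs.simple i)
        = Y w * (h (cs.simple i) + algebraMap K H ((t1 + t2) / wK w (Eelt exp (α i)))))
    (w0 : W) (hw0 : ∀ u : W, cs.length u ≤ cs.length w0)
    (star : K →+* K)
    (hstar_exp : ∀ lam : Λ, star ((exp (Multiplicative.ofAdd lam) : Kˣ) : K)
      = ((exp (Multiplicative.ofAdd (-lam)) : Kˣ) : K))
    (hstar_t1 : star t1 = t1) (hstar_t2 : star t2 = t2)
    (v : W) :
    OmegaMap hb h w0 (Y (w0 * v * w0))
      = mapCoeff hb h (fun c => star (wK w0 c)) (Y v) := by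
  have hR : IsRootAction cs wΛ α coroot := ⟨hact, hαα, hcart⟩
  have hsq := hR.longest_mul_self hindep hw0
  have hℓ := hR.length_longest_mul_mul_longest hindep hw0
  set φ : K →+* K := star.comp (wK w0 : K →+* K) with hφ
  have hφ₁ : φ t1 = t1 := by simp [hφ, hwt1, hstar_t1]
  have hφ₂ : φ t2 = t2 := by simp [hφ, hwt2, hstar_t2]
  change twistMap h hb (RingHom.id K) (fun x => w0 * x * w0) _ = twistMap h hb φ id _
  induction v using cs.induction_mul_simple with
  | one =>
    rw [mul_one, hsq, hY1, ← hone, twistMap_apply_basis hbasis, twistMap_apply_basis hbasis,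
      mul_one, hsq]
    rfl
  | mul_simple u i hui ih =>
    obtain ⟨j, hj, hj', hroot⟩ := hR.exists_longest_mul_simple_mul_longest hindep hw0 i
    have hσ : ∀ x, w0 * (x * cs.simple j) * w0 = w0 * x * w0 * cs.simple i := fun x => by
      rw [mul_mul_mul_of_mul_self_eq_one hsq, hj']
    have hdecomp : w0 * (u * cs.simple i) * w0 = w0 * u * w0 * cs.simple j := by
      rw [mul_mul_mul_of_mul_self_eq_one hsq, hj]
    have hcoeff : (t1 + t2) / wK (w0 * u * w0) (Eelt exp (α j)) =
        φ ((t1 + t2) / wK u (Eelt exp (α i))) := by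
      rw [map_div₀, map_add, hφ₁, hφ₂, hφ, RingHom.comp_apply, RingHom.coe_coe, map_Eelt hwexp,
        map_Eelt hwexp, map_Eelt hwexp, star_Eelt hstar_exp, toAdd_map_mul_apply,
        toAdd_map_mul_apply, hroot, map_neg, map_neg]
    rw [hdecomp, hYrec _ _ (by rw [← hdecomp, hℓ, hℓ, hui]), hYrec _ _ hui, mul_add, mul_add,
      map_add, map_add, twistMap_mul_algebraMap, twistMap_mul_algebraMap,
      twistMap_mul_simple hbasis cs hquad hmul rfl rfl hσ hℓ,
      twistMap_mul_simple hbasis cs hquad hmul hφ₁ hφ₂ (σ := id) (j := i) (fun _ => rfl)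
        (fun _ => rfl), ih, hcoeff, RingHom.id_apply]

/-- `Ω(Y_{w0 v w0}) = ⋆[w0(Y_v)]`, where `Ω` is determined by
`Ω(h_w) = h_{w0 w w0}`, and `⋆` and the `w0`-action are applied to the coefficients of
`Y_v` in the basis `{h_w}`. -/
theorem omega_yang_baxter_eq_star_w0
    {r : ℕ} {W : Type*} [Group W] [Fintype W] {M : CoxeterMatrix (Fin r)}
    (cs : CoxeterSystem M W)
    {Λ : Type*} [AddCommGroup Λ] (wΛ : W →* Multiplicative (AddAut Λ)) (α : Fin r → Λ)
    (coroot : Fin r → (Λ →+ ℤ))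
    (hact : ∀ (i : Fin r) (lam : Λ), Multiplicative.toAdd (wΛ (cs.simple i)) lam = lam - (coroot i lam) • α i)
    (hαα : ∀ i : Fin r, coroot i (α i) = 2)
    (hindep : LinearIndependent ℤ α)
    (hcart : ∀ i j : Fin r, i ≠ j →
      (M.M i j = 2 ∧ coroot i (α j) = 0 ∧ coroot j (α i) = 0) ∨
      (M.M i j = 3 ∧ coroot i (α j) = -1 ∧ coroot j (α i) = -1) ∨
      (M.M i j = 4 ∧ coroot i (α j) * coroot j (α i) = 2 ∧
        coroot i (α j) < 0 ∧ coroot j (α i) < 0) ∨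
      (M.M i j = 6 ∧ coroot i (α j) * coroot j (α i) = 3 ∧
        coroot i (α j) < 0 ∧ coroot j (α i) < 0))
    {K : Type*} [Field K] (exp : Multiplicative Λ →* Kˣ)
    (hexp_inj : Function.Injective exp)
    (t1 t2 : K) (wK : W →* RingAut K)
    (hwexp : ∀ (w : W) (lam : Λ),
      wK w ((exp (Multiplicative.ofAdd lam) : Kˣ) : K)
        = ((exp (Multiplicative.ofAdd (Multiplicative.toAdd (wΛ w) lam)) : Kˣ) : K))
    (hwt1 : ∀ w : W, wK w t1 = t1) (hwt2 : ∀ w : W, wK w t2 = t2)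
    {H : Type*} [Ring H] [Algebra K H]
    (h : W → H) (hb : Module.Basis W K H)
    (hbasis : ∀ w : W, hb w = h w)
    (hone : h 1 = 1)
    (hmul : ∀ u v : W, cs.length (u * v) = cs.length u + cs.length v →
      h (u * v) = h u * h v)
    (hquad : ∀ i : Fin r,
      (h (cs.simple i) - algebraMap K H t1) * (h (cs.simple i) - algebraMap K H t2) = 0)
    (Y : W → H) (hY1 : Y 1 = 1)
    (hYrec : ∀ (w : W) (i : Fin r), cs.length (w * cs.simple i) = cs.length w + 1 →
      Y (w * cs.simple i)
        = Y w * (h (cs.simple i) + algebraMap K H ((t1 + t2) / wK w (Eelt exp (α i)))))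
    (w0 : W) (hw0 : ∀ u : W, cs.length u ≤ cs.length w0)
    (star : K →+* K)
    (hstar_exp : ∀ lam : Λ, star ((exp (Multiplicative.ofAdd lam) : Kˣ) : K)
      = ((exp (Multiplicative.ofAdd (-lam)) : Kˣ) : K))
    (hstar_t1 : star t1 = t1) (hstar_t2 : star t2 = t2)
    (v : W) :
    OmegaMap hb h w0 (Y (w0 * v * w0))
      = mapCoeff hb h (fun c => star (wK w0 c)) (Y v) :=
  omega_yang_baxter_eq_star_w0_general cs wΛ α coroot hact hαα hindep hcart exp t1 t2 wK hwexp hwt1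
    hwt2 h hb hbasis hone hmul hquad Y hY1 hYrec w0 hw0 star hstar_exp hstar_t1 hstar_t2 v
end
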